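/- arXiv:2104.11537 — 2 statements merged into one kernel-verified Lean document; each statement's English description precedes it below -/
import Mathlib

section
/- Let Y(X) = A X Aᴴ + a·A·diag(X)·Aᴴ + b·diag(C X Cᴴ) + F with a, b ≥ 0 real scalars, A ∈ ℂ^{m×n}, C ∈ ℂ^{m×n}, F positive definite Hermitian. Then the gradient of X ↦ ln det(Y(X)) with respect to the Hermitian matrix X equals Aᴴ Y⁻¹ A + a·diag(Aᴴ Y⁻¹ A) + b·Cᴴ diag(Y⁻¹) C. -/
/-!
`Y` is affine, `Y (X + H) = Y X + L H` with `L = ldrMap A C a b` its linear part, and `Y X` is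
positive definite (a sum of positive semidefinite terms and `F`), so `det (Y X)` is a positive
real. Jacobi's formula `d det_M = tr (adj M · _)`, read off from the multilinearity of `det` in
the rows, then gives `d logdet_M = Re tr (M⁻¹ · _)` there, and by the chain rule the derivative
of `H ↦ logdet Y(X + H)` at `0` is `H ↦ Re tr (Y⁻¹ L H)`. Moving `L` across the trace pairing
turns this into `Re tr (L* Y⁻¹ · H)`, where `L* Y⁻¹ = ldrAdjoint A C a b Y⁻¹` is the claimed
gradient; it is Hermitian, so it equals its conjugate transpose.
-/

open Matrix Topology Asymptotics
open scoped ComplexOrder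

attribute [local instance] Matrix.frobeniusNormedAddCommGroup

/-- `ln det` via the real part of the determinant. -/
noncomputable def logdet {k : Type*} [Fintype k] [DecidableEq k]
    (M : Matrix k k ℂ) : ℝ := Real.log M.det.re

/-- `diag M`: the diagonal matrix obtained by zeroing the off-diagonal entries of `M`. -/
def dg {k : Type*} [Fintype k] [DecidableEq k] (M : Matrix k k ℂ) : Matrix k k ℂ :=
  Matrix.diagonal fun i => M i i

attribute [local instance] Matrix.frobeniusNormedSpace

section

variable {k : Type*} [Fintype k] [DecidableEq k]

namespace Matrix

noncomputable def traceMulLeftCLM (N : Matrix k k ℂ) : Matrix k k ℂ →L[ℂ] ℂ :=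
  LinearMap.toContinuousLinearMap (traceLinearMap k ℂ ℂ ∘ₗ LinearMap.mulLeft ℂ N)

lemma sum_det_updateRow_eq_trace (M E : Matrix k k ℂ) :
    ∑ i, (M.updateRow i (E i)).det = (M.adjugate * E).trace := by
  simp only [← cramer_transpose_apply, cramer_eq_adjugate_mulVec, ← adjugate_transpose, trace,
    diag, mul_apply, mulVec, dotProduct, transpose_apply]
  exact Finset.sum_comm

variable (k) in
noncomputable def detRowContinuousMultilinear :
    ContinuousMultilinearMap ℂ (fun _ : k => k → ℂ) ℂ :=
  { (detRowAlternating : (k → ℂ) [⋀^k]→ₗ[ℂ] ℂ).toMultilinearMap with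
    cont := continuous_id.matrix_det }

theorem hasFDerivAt_det (M : Matrix k k ℂ) :
    HasFDerivAt det (traceMulLeftCLM M.adjugate) M := by
  let rows : Matrix k k ℂ →L[ℂ] (k → k → ℂ) :=
    LinearMap.toContinuousLinearMap (ofLinearEquiv ℂ).symm.toLinearMap
  refine ((detRowContinuousMultilinear k).hasFDerivAt (rows M)
    |>.comp M rows.hasFDerivAt).congr_fderiv ?_
  ext E
  exact ((detRowContinuousMultilinear k).linearDeriv_apply (rows M) (rows E)).trans
    (sum_det_updateRow_eq_trace M E)

end Matrix

theorem hasFDerivAt_logdet {M : Matrix k k ℂ} (hM : 0 < M.det) :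
    HasFDerivAt logdet (Complex.reCLM.comp ((traceMulLeftCLM M⁻¹).restrictScalars ℝ)) M := by
  obtain ⟨hre, him⟩ : 0 < M.det.re ∧ 0 = M.det.im := Complex.lt_def.mp hM
  have hdet : M.det = (M.det.re : ℂ) := Complex.ext rfl (by simp [← him])
  have hadj : M.adjugate = (M.det.re : ℂ) • M⁻¹ := by
    rw [← hdet, inv_def, smul_smul, Ring.mul_inverse_cancel _ (isUnit_iff_ne_zero.mpr hM.ne'),
      one_smul]
  refine ((Real.hasDerivAt_log hre.ne').comp_hasFDerivAt M
    (Complex.reCLM.hasFDerivAt.comp M ((hasFDerivAt_det M).restrictScalars ℝ))).congr_fderiv ?_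
  ext E
  change M.det.re⁻¹ * (M.adjugate * E).trace.re = (M⁻¹ * E).trace.re
  rw [hadj, smul_mul, trace_smul, smul_eq_mul, Complex.re_ofReal_mul,
    inv_mul_cancel_left₀ hre.ne']

lemma dg_add (M N : Matrix k k ℂ) : dg (M + N) = dg M + dg N := by
  simp [dg]

lemma dg_smul (c : ℂ) (M : Matrix k k ℂ) : dg (c • M) = c • dg M := by
  rw [dg, dg, ← diagonal_smul]
  rfl

lemma conjTranspose_dg (M : Matrix k k ℂ) : (dg M)ᴴ = dg Mᴴ := by
  simp [dg]

lemma trace_mul_dg (M N : Matrix k k ℂ) : (M * dg N).trace = (dg M * N).trace := by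
  simp [dg, trace, mul_diagonal, diagonal_mul]

lemma Matrix.PosSemidef.dg {M : Matrix k k ℂ} (hM : M.PosSemidef) : (dg M).PosSemidef :=
  posSemidef_diagonal_iff.mpr fun _ => hM.diag_nonneg

end

section LimitedDynamicRange

variable {m n : Type*} [Fintype m] [Fintype n] [DecidableEq m] [DecidableEq n]

noncomputable def ldrMap (A C : Matrix m n ℂ) (a b : ℝ) : Matrix n n ℂ →ₗ[ℂ] Matrix m m ℂ where
  toFun H := A * H * Aᴴ + (a : ℂ) • (A * dg H * Aᴴ) + (b : ℂ) • dg (C * H * Cᴴ)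
  map_add' P Q := by
    simp only [Matrix.mul_add, Matrix.add_mul, dg_add, smul_add]
    abel
  map_smul' c P := by
    simp only [Matrix.mul_smul, Matrix.smul_mul, dg_smul, smul_add, smul_comm c,
      RingHom.id_apply]

def ldrAdjoint (A C : Matrix m n ℂ) (a b : ℝ) (W : Matrix m m ℂ) : Matrix n n ℂ :=
  Aᴴ * W * A + (a : ℂ) • dg (Aᴴ * W * A) + (b : ℂ) • (Cᴴ * dg W * C)

variable (A C : Matrix m n ℂ) (a b : ℝ)

lemma trace_mul_ldrMap (W : Matrix m m ℂ) (H : Matrix n n ℂ) :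
    (W * ldrMap A C a b H).trace = (ldrAdjoint A C a b W * H).trace := by
  have trace_sandwich : ∀ (B : Matrix m n ℂ) (V : Matrix m m ℂ) (K : Matrix n n ℂ),
      (V * (B * K * Bᴴ)).trace = (Bᴴ * V * B * K).trace := by
    intro B V K
    rw [← Matrix.mul_assoc, ← Matrix.mul_assoc, trace_mul_comm]
    simp only [Matrix.mul_assoc]
  simp only [ldrMap, ldrAdjoint, LinearMap.coe_mk, AddHom.coe_mk, Matrix.mul_add,
    Matrix.add_mul, Matrix.mul_smul, Matrix.smul_mul, trace_add, trace_smul, trace_sandwich,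
    trace_mul_dg]

lemma isHermitian_ldrAdjoint {W : Matrix m m ℂ} (hW : W.IsHermitian) :
    (ldrAdjoint A C a b W).IsHermitian := by
  simp only [IsHermitian, ldrAdjoint, conjTranspose_add, conjTranspose_smul, conjTranspose_mul,
    conjTranspose_conjTranspose, conjTranspose_dg, hW.eq, Complex.star_def, Complex.conj_ofReal,
    Matrix.mul_assoc]

lemma posSemidef_ldrMap {a b : ℝ} (ha : 0 ≤ a) (hb : 0 ≤ b) {X : Matrix n n ℂ}
    (hX : X.PosSemidef) : (ldrMap A C a b X).PosSemidef :=
  ((hX.mul_mul_conjTranspose_same A).add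
    ((hX.dg.mul_mul_conjTranspose_same A).smul (Complex.zero_le_real.mpr ha))).add
    ((hX.mul_mul_conjTranspose_same C).dg.smul (Complex.zero_le_real.mpr hb))

end LimitedDynamicRange

theorem stmt2_general {m n : ℕ} (A C : Matrix (Fin m) (Fin n) ℂ)
    (F : Matrix (Fin m) (Fin m) ℂ) (hF : F.PosDef)
    (a b : ℝ) (ha : 0 ≤ a) (hb : 0 ≤ b)
    (X : Matrix (Fin n) (Fin n) ℂ) (hX : X.PosSemidef)
    (Y : Matrix (Fin n) (Fin n) ℂ → Matrix (Fin m) (Fin m) ℂ)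
    (hYdef : ∀ Z, Y Z = A * Z * Aᴴ + (a : ℂ) • (A * dg Z * Aᴴ)
        + (b : ℂ) • dg (C * Z * Cᴴ) + F) :
    (fun H : Matrix (Fin n) (Fin n) ℂ =>
        logdet (Y (X + H)) - logdet (Y X)
          - (((Aᴴ * (Y X)⁻¹ * A + (a : ℂ) • dg (Aᴴ * (Y X)⁻¹ * A)
                + (b : ℂ) • (Cᴴ * dg ((Y X)⁻¹) * C))ᴴ * H).trace).re)
      =o[𝓝[{H : Matrix (Fin n) (Fin n) ℂ | H.IsHermitian}] 0]
        fun H : Matrix (Fin n) (Fin n) ℂ => ‖H‖ := by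
  set L := LinearMap.toContinuousLinearMap (ldrMap A C a b)
  have hYL : ∀ Z, Y Z = L Z + F := hYdef
  have hYX : (Y X).PosDef := hYL X ▸ PosDef.posSemidef_add (posSemidef_ldrMap A C ha hb hX) hF
  have hshift : (logdet ∘ fun H => Y X + L H) = fun H => logdet (Y (X + H)) := by
    funext H
    rw [Function.comp_apply, hYL, hYL, map_add, add_right_comm]
  have hlog : HasFDerivAt logdet
      (Complex.reCLM.comp ((traceMulLeftCLM (Y X)⁻¹).restrictScalars ℝ)) (Y X + L 0) := by
    rw [map_zero, add_zero]
    exact hasFDerivAt_logdet hYX.det_pos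
  have hderiv := hlog.comp 0 ((L.hasFDerivAt.const_add (Y X)).restrictScalars ℝ)
  rw [hshift, hasFDerivAt_iff_isLittleO_nhds_zero] at hderiv
  refine (hderiv.norm_right.mono nhdsWithin_le_nhds).congr' (.of_forall fun H => ?_) .rfl
  change logdet (Y (X + (0 + H))) - logdet (Y (X + 0)) - ((Y X)⁻¹ * ldrMap A C a b H).trace.re
    = _ - _ - ((ldrAdjoint A C a b (Y X)⁻¹)ᴴ * H).trace.re
  rw [zero_add, add_zero, trace_mul_ldrMap,
    (isHermitian_ldrAdjoint A C a b hYX.isHermitian.inv).eq]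

/-- For `Y(X) = A X Aᴴ + a A diag(X) Aᴴ + b diag(C X Cᴴ) + F` with `a, b ≥ 0` and `F`
positive definite, the gradient of `X ↦ ln det Y(X)` with respect to Hermitian `X`
equals `Aᴴ Y⁻¹ A + a diag(Aᴴ Y⁻¹ A) + b Cᴴ diag(Y⁻¹) C`, in the Frobenius
first-order-expansion sense along Hermitian perturbations. -/
theorem stmt2 {m n : ℕ} (A C : Matrix (Fin m) (Fin n) ℂ)
    (F : Matrix (Fin m) (Fin m) ℂ) (hF : F.PosDef)
    (a b : ℝ) (ha : 0 ≤ a) (hb : 0 ≤ b)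
    (X : Matrix (Fin n) (Fin n) ℂ) (hX : X.PosSemidef)
    (Y : Matrix (Fin n) (Fin n) ℂ → Matrix (Fin m) (Fin m) ℂ)
    (hYdef : ∀ Z, Y Z = A * Z * Aᴴ + (a : ℂ) • (A * dg Z * Aᴴ)
        + (b : ℂ) • dg (C * Z * Cᴴ) + F)
    (hY : IsUnit (Y X).det) :
    (fun H : Matrix (Fin n) (Fin n) ℂ =>
        logdet (Y (X + H)) - logdet (Y X)
          - (((Aᴴ * (Y X)⁻¹ * A + (a : ℂ) • dg (Aᴴ * (Y X)⁻¹ * A)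
                + (b : ℂ) • (Cᴴ * dg ((Y X)⁻¹) * C))ᴴ * H).trace).re)
      =o[𝓝[{H : Matrix (Fin n) (Fin n) ℂ | H.IsHermitian}] 0]
        fun H : Matrix (Fin n) (Fin n) ℂ => ‖H‖ :=
  stmt2_general A C F hF a b ha hb X hX Y hYdef
end

section
/- Rate monotonicity under dimension reduction: for Hermitian matrices R ⪰ R̄ ≻ 0 of size n×n and any F ∈ ℂ^{r×n} with r ≤ n and full row rank, ln det((F R̄ Fᴴ)⁻¹ (F R Fᴴ)) ≤ ln det(R̄⁻¹ R). -/
open Matrix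
open scoped ComplexOrder

/-!
Write `R = R̄ + WᴴW`. By the Weinstein–Aronszajn identity `det (1 + G H) = det (1 + H G)`,
the two sides become `ln det (1 + W M Wᴴ)` with `M = Fᴴ (F R̄ Fᴴ)⁻¹ F` on the left and
`M = R̄⁻¹` on the right. The difference `X = R̄⁻¹ - Fᴴ (F R̄ Fᴴ)⁻¹ F` satisfies `X = X R̄ X`,
so it is positive semidefinite, and the determinant is monotone in the Loewner order.
-/

open scoped MatrixOrder

namespace Matrix

variable {𝕜 k : Type*} [RCLike 𝕜] [Fintype k] [DecidableEq k]

lemma IsHermitian.eigenvalues_le_one {C : Matrix k k 𝕜} (hC : C.IsHermitian) (h : C ≤ 1)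
    (i : k) : hC.eigenvalues i ≤ 1 :=
  (le_algebraMap_iff_spectrum_le (r := (1 : ℝ)) hC.isSelfAdjoint).mp (by simpa using h) _
    (hC.eigenvalues_mem_spectrum_real i)

lemma det_le_one_of_le_one {C : Matrix k k 𝕜} (hC : 0 ≤ C) (h : C ≤ 1) : C.det ≤ 1 := by
  have hCh := hC.posSemidef.isHermitian
  rw [hCh.det_eq_prod_eigenvalues, ← RCLike.ofReal_prod, ← RCLike.ofReal_one,
    RCLike.ofReal_le_ofReal]
  exact Finset.prod_le_one (fun i _ => hC.posSemidef.eigenvalues_nonneg i)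
    fun i _ => hCh.eigenvalues_le_one h i

lemma det_le_det_of_le {A B : Matrix k k 𝕜} (hA : 0 ≤ A) (hB : B.PosDef) (hAB : A ≤ B) :
    A.det ≤ B.det := by
  set S := CFC.sqrt B
  have hSS : S * S = B := CFC.sqrt_mul_sqrt_self B hB.posSemidef.nonneg
  have hS : IsUnit S.det := by
    refine isUnit_iff_ne_zero.mpr fun h => hB.det_pos.ne' ?_
    rw [← hSS, det_mul, h, mul_zero]
  have hSinv : IsSelfAdjoint S⁻¹ := (CFC.sqrt_nonneg B).posSemidef.isHermitian.inv.isSelfAdjoint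
  set C := S⁻¹ * A * S⁻¹
  have hC0 : 0 ≤ C := by simpa using hSinv.conjugate_le_conjugate hA
  have hC1 : C ≤ 1 := by
    simpa [C, ← hSS, Matrix.mul_assoc, nonsing_inv_mul_cancel_left _ _ hS, mul_nonsing_inv _ hS]
      using hSinv.conjugate_le_conjugate hAB
  have hAC : A = S * C * S := by
    simp [C, Matrix.mul_assoc, mul_nonsing_inv_cancel_left _ _ hS, nonsing_inv_mul _ hS]
  calc A.det = B.det * C.det := by rw [hAC, ← hSS]; simp only [det_mul]; ring
    _ ≤ B.det * 1 := mul_le_mul_of_nonneg_left (det_le_one_of_le_one hC0 hC1) hB.det_pos.le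
    _ = B.det := mul_one _

lemma conjTranspose_mul_inv_mul_le_inv {m : Type*} [Fintype m] [DecidableEq m]
    {A : Matrix k k 𝕜} (hA : A.PosDef) (F : Matrix m k 𝕜) :
    Fᴴ * (F * A * Fᴴ)⁻¹ * F ≤ A⁻¹ := by
  set B := F * A * Fᴴ
  set K := Fᴴ * B⁻¹ * F
  have hBinv : B⁻¹ * B * B⁻¹ = B⁻¹ := by
    by_cases h : IsUnit B.det
    · rw [nonsing_inv_mul _ h, Matrix.one_mul]
    · simp [nonsing_inv_apply_not_isUnit _ h]
  have hKAK : K * A * K = K :=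
    calc K * A * K = Fᴴ * (B⁻¹ * B * B⁻¹) * F := by simp only [K, B, Matrix.mul_assoc]
      _ = K := by rw [hBinv]
  have hAu : IsUnit A.det := hA.det_pos.ne'.isUnit
  have hK : K.IsHermitian :=
    isHermitian_conjTranspose_mul_mul F (isHermitian_mul_mul_conjTranspose F hA.isHermitian).inv
  set X := A⁻¹ - K
  have hX : Xᴴ = X := (hA.isHermitian.inv.sub hK).eq
  have hXAX : Xᴴ * A * X = X := by
    rw [hX]
    calc X * A * X = A⁻¹ * A * A⁻¹ - A⁻¹ * A * K - K * A * A⁻¹ + K * A * K := by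
          simp only [X]; noncomm_ring
      _ = X := by
          rw [hKAK, nonsing_inv_mul _ hAu, Matrix.mul_assoc K, mul_nonsing_inv _ hAu]
          simp only [X, Matrix.one_mul, Matrix.mul_one]
          abel
  exact le_iff.mpr (show X.PosSemidef from hXAX ▸ hA.posSemidef.conjTranspose_mul_mul_same X)

lemma vecMul_injective_of_rank_eq_card {K m n : Type*} [Field K] [Fintype m] [Fintype n]
    {F : Matrix m n K} (h : F.rank = Fintype.card m) : Function.Injective F.vecMul :=
  vecMul_injective_iff.mpr <| linearIndependent_iff_card_eq_finrank_span.mpr <| by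
    rw [Set.finrank, ← rank_eq_finrank_span_row, h]

end Matrix

lemma logdet_le_logdet_of_le {k : Type*} [Fintype k] [DecidableEq k] {A B : Matrix k k ℂ}
    (hA : A.PosDef) (hAB : A ≤ B) : logdet A ≤ logdet B := by
  have hB : B.PosDef := by simpa using hA.add_posSemidef hAB
  refine Real.log_le_log ?_ (Complex.le_def.mp (det_le_det_of_le hA.posSemidef.nonneg hB hAB)).1
  simpa using (Complex.lt_def.mp hA.det_pos).1

lemma logdet_inv_mul_add_mul {k m : Type*} [Fintype k] [DecidableEq k] [Fintype m]
    [DecidableEq m] {A : Matrix k k ℂ} (hA : IsUnit A.det) (G : Matrix k m ℂ) (H : Matrix m k ℂ) :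
    logdet (A⁻¹ * (A + G * H)) = logdet (1 + H * A⁻¹ * G) := by
  rw [logdet, logdet, Matrix.mul_add, nonsing_inv_mul _ hA, ← Matrix.mul_assoc,
    det_one_add_mul_comm, Matrix.mul_assoc]

theorem stmt16_general {r n : ℕ} (R Rb : Matrix (Fin n) (Fin n) ℂ)
    (hRb : Rb.PosDef) (hdiff : (R - Rb).PosSemidef)
    (F : Matrix (Fin r) (Fin n) ℂ) (hrank : F.rank = r) :
    logdet ((F * Rb * Fᴴ)⁻¹ * (F * R * Fᴴ)) ≤ logdet (Rb⁻¹ * R) := by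
  obtain ⟨W, hW⟩ := CStarAlgebra.nonneg_iff_eq_star_mul_self.mp hdiff.nonneg
  rw [star_eq_conjTranspose] at hW
  have hR : R = Rb + Wᴴ * W := by rw [← hW]; abel
  have hB : (F * Rb * Fᴴ).PosDef :=
    hRb.mul_mul_conjTranspose_same (vecMul_injective_of_rank_eq_card (by simpa using hrank))
  have hFRF : F * R * Fᴴ = F * Rb * Fᴴ + (F * Wᴴ) * (W * Fᴴ) := by
    rw [hR]; simp only [Matrix.mul_add, Matrix.add_mul, Matrix.mul_assoc]
  rw [hFRF, logdet_inv_mul_add_mul hB.det_pos.ne'.isUnit, hR,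
    logdet_inv_mul_add_mul hRb.det_pos.ne'.isUnit,
    show W * Fᴴ * (F * Rb * Fᴴ)⁻¹ * (F * Wᴴ) = W * (Fᴴ * (F * Rb * Fᴴ)⁻¹ * F) * Wᴴ by
      simp only [Matrix.mul_assoc]]
  have hK : (Fᴴ * (F * Rb * Fᴴ)⁻¹ * F).PosSemidef :=
    hB.inv.posSemidef.conjTranspose_mul_mul_same F
  have hKW := star_right_conjugate_le_conjugate (conjTranspose_mul_inv_mul_le_inv hRb F) W
  exact logdet_le_logdet_of_le (PosDef.one.add_posSemidef (hK.mul_mul_conjTranspose_same W))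
    (add_le_add_right hKW 1)

/-- Rate monotonicity under dimension reduction: for `R ⪰ R̄ ≻ 0` and a full-row-rank
combiner `F ∈ ℂ^{r×n}` with `r ≤ n`,
`ln det((F R̄ Fᴴ)⁻¹ (F R Fᴴ)) ≤ ln det(R̄⁻¹ R)`. -/
theorem stmt16 {r n : ℕ} (R Rb : Matrix (Fin n) (Fin n) ℂ)
    (hRb : Rb.PosDef) (hR : R.IsHermitian) (hdiff : (R - Rb).PosSemidef)
    (hrn : r ≤ n) (F : Matrix (Fin r) (Fin n) ℂ) (hrank : F.rank = r) :
    logdet ((F * Rb * Fᴴ)⁻¹ * (F * R * Fᴴ)) ≤ logdet (Rb⁻¹ * R) :=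
  stmt16_general R Rb hRb hdiff F hrank
end
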